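/- Fix p ∈ (0,1) and set k_n = ⌈2 ln n / p⌉. Then the probability, under G(n,p), of the event that every vertex set S with |S| = k_n satisfies |N(S)| ≥ n − |S| − k_n (i.e. |N(S)| ≥ n − 2k_n) tends to 1 as n → ∞. (Lemma: almost surely all k_p-sets have almost full neighborhoods.) -/

import Mathlib

open Finset MeasureTheory Filter
open scoped ENNReal

/-- The simple graph on `Fin n` determined by an indicator of edges,
a function from 2-element subsets (unordered pairs) of `Fin n` to `Bool`. -/
def graphOf {n : ℕ} (f : Sym2 (Fin n) → Bool) : SimpleGraph (Fin n) where
  Adj v w := v ≠ w ∧ f s(v, w) = true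
  symm := ⟨fun v w ⟨h, hf⟩ => ⟨h.symm, by rwa [Sym2.eq_swap]⟩⟩
  loopless := ⟨fun v ⟨h, _⟩ => h rfl⟩

instance {n : ℕ} (f : Sym2 (Fin n) → Bool) : DecidableRel (graphOf f).Adj :=
  fun v w => inferInstanceAs (Decidable (v ≠ w ∧ f s(v, w) = true))

/-- The Erdős–Rényi random graph `G(n,p)`: product Bernoulli(p) measure on
edge-indicator functions. -/
noncomputable def gnp (n : ℕ) (p : ℝ) (hp : p ≤ 1) :
    Measure (Sym2 (Fin n) → Bool) :=
  Measure.pi fun _ =>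
    (PMF.bernoulli (Real.toNNReal p) (Real.toNNReal_le_one.mpr hp)).toMeasure

/-- The external neighborhood `N(X)`: vertices outside `X` adjacent to some vertex of `X`. -/
noncomputable def extNbhd {V : Type*} [Fintype V] (G : SimpleGraph V) (X : Finset V) :
    Finset V := by
  classical exact Finset.univ.filter fun v => v ∉ X ∧ ∃ x ∈ X, G.Adj x v

/-!
If some `k`-set `S` has `|N(S)| < n - 2k`, then more than `k` vertices outside `S` have no
neighbour in `S`, so there are disjoint `k`-sets `S`, `T` with none of the `k²` edges between them.
A union bound over the at most `C(n,k)²` such pairs bounds the failure probability by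
`C(n,k)² (1-p)^{k²} ≤ (n² (1-p)^k)^k / (k!)² ≤ 1 / (k!)²`, since `(1-p)^k ≤ e^{-pk} ≤ n^{-2}`
for `k = ⌈2 ln n / p⌉`; and `k → ∞`.
-/

def crossPairs {α : Type*} [DecidableEq α] (S T : Finset α) : Finset (Sym2 α) :=
  (S ×ˢ T).image fun x => s(x.1, x.2)

lemma card_crossPairs {α : Type*} [DecidableEq α] {S T : Finset α} (h : Disjoint S T) :
    #(crossPairs S T) = #S * #T := by
  rw [crossPairs, card_image_of_injOn, card_product]
  rintro ⟨x, y⟩ hxy ⟨x', y'⟩ hxy' heq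
  simp only [coe_product, Set.mem_prod, mem_coe] at hxy hxy'
  rcases Sym2.mk_eq_mk_iff.mp heq with heq | ⟨rfl, rfl⟩
  · exact heq
  · exact absurd hxy.1 (disjoint_right.mp h hxy'.2)

lemma mem_extNbhd {V : Type*} [Fintype V] {G : SimpleGraph V} {X : Finset V} {v : V} :
    v ∈ extNbhd G X ↔ v ∉ X ∧ ∃ x ∈ X, G.Adj x v := by
  simp [extNbhd]

lemma exists_disjoint_nonadj_of_card_extNbhd {V : Type*} [Fintype V] [DecidableEq V]
    (G : SimpleGraph V) (S : Finset V) {k : ℕ}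
    (h : #(extNbhd G S) + #S + k ≤ Fintype.card V) :
    ∃ T : Finset V, #T = k ∧ Disjoint S T ∧ ∀ x ∈ S, ∀ y ∈ T, ¬ G.Adj x y := by
  have hk : k ≤ #(Sᶜ \ extNbhd G S) := by
    have := le_card_sdiff (extNbhd G S) Sᶜ
    rw [card_compl] at this
    omega
  obtain ⟨T, hT, rfl⟩ := exists_subset_card_eq hk
  have hT' : ∀ y ∈ T, y ∉ S ∧ y ∉ extNbhd G S := fun y hy => by
    simpa using hT hy
  refine ⟨T, rfl, disjoint_right.mpr fun y hy => (hT' y hy).1, fun x hx y hy hadj => ?_⟩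
  exact (hT' y hy).2 (mem_extNbhd.mpr ⟨(hT' y hy).1, x, hx, hadj⟩)

lemma exists_crossPairs_eq_false_of_card_extNbhd_lt {n k : ℕ} (f : Sym2 (Fin n) → Bool)
    {S : Finset (Fin n)} (hS : #S = k) (h : #(extNbhd (graphOf f) S) < n - 2 * k) :
    ∃ T : Finset (Fin n), #T = k ∧ Disjoint S T ∧ ∀ e ∈ crossPairs S T, f e = false := by
  obtain ⟨T, hT, hST, hnonadj⟩ :=
    exists_disjoint_nonadj_of_card_extNbhd (graphOf f) S (k := k) (by rw [Fintype.card_fin]; omega)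
  refine ⟨T, hT, hST, fun e he => ?_⟩
  obtain ⟨⟨x, y⟩, hxy, rfl⟩ := mem_image.mp he
  rw [mem_product] at hxy
  have hne : x ≠ y := fun hx => disjoint_left.mp hST hxy.1 (hx ▸ hxy.2)
  simpa [graphOf, hne] using hnonadj x hxy.1 y hxy.2

instance gnp.isProbabilityMeasure (n : ℕ) (p : ℝ) (hp : p ≤ 1) :
    IsProbabilityMeasure (gnp n p hp) := by
  unfold gnp; infer_instance

lemma gnp_forall_mem_eq_false (n : ℕ) (p : ℝ) (hp : p ≤ 1) (E : Finset (Sym2 (Fin n))) :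
    gnp n p hp {f | ∀ e ∈ E, f e = false} = (1 - ENNReal.ofReal p) ^ #E := by
  have hpi : {f : Sym2 (Fin n) → Bool | ∀ e ∈ E, f e = false} =
      Set.univ.pi fun e => if e ∈ E then {false} else Set.univ := by
    ext f
    simp only [Set.mem_ofPred_eq, Set.mem_univ_pi]
    refine forall_congr' fun e => ?_
    split_ifs with he <;> simp [he]
  have hfalse : (PMF.bernoulli (Real.toNNReal p) (Real.toNNReal_le_one.mpr hp)).toMeasure {false}
      = 1 - ENNReal.ofReal p := by
    rw [PMF.toMeasure_apply_singleton _ _ (measurableSet_singleton _), PMF.bernoulli_apply,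
      Bool.cond_false, ENNReal.coe_sub, ENNReal.coe_one]
    rfl
  rw [hpi, gnp, Measure.pi_pi]
  simp only [apply_ite, hfalse, measure_univ]
  rw [prod_ite_mem, univ_inter, prod_const]

lemma gnp_exists_card_extNbhd_lt_le (n k : ℕ) (p : ℝ) (hp : p ≤ 1) :
    gnp n p hp {f | ∀ S : Finset (Fin n), #S = k → n - 2 * k ≤ #(extNbhd (graphOf f) S)}ᶜ ≤
      (n.choose k ^ 2 : ℕ) * (1 - ENNReal.ofReal p) ^ (k * k) := by
  set P := (powersetCard k (univ : Finset (Fin n)) ×ˢ powersetCard k univ).filter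
    fun q => Disjoint q.1 q.2
  have hcover :
      {f : Sym2 (Fin n) → Bool | ∀ S, #S = k → n - 2 * k ≤ #(extNbhd (graphOf f) S)}ᶜ ⊆
        ⋃ q ∈ P, {f | ∀ e ∈ crossPairs q.1 q.2, f e = false} := by
    intro f hf
    simp only [Set.mem_compl_iff, Set.mem_ofPred_eq, not_forall, not_le] at hf
    obtain ⟨S, hS, hlt⟩ := hf
    obtain ⟨T, hT, hST, hf⟩ := exists_crossPairs_eq_false_of_card_extNbhd_lt f hS hlt
    exact Set.mem_biUnion (x := (S, T)) (by simp [P, hS, hT, hST]) hf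
  have hcardP : #P ≤ n.choose k ^ 2 := by
    calc #P ≤ #(powersetCard k (univ : Finset (Fin n)) ×ˢ powersetCard k univ) :=
          card_filter_le _ _
      _ = n.choose k ^ 2 := by simp [sq]
  calc _ ≤ gnp n p hp (⋃ q ∈ P, {f | ∀ e ∈ crossPairs q.1 q.2, f e = false}) :=
        measure_mono hcover
    _ ≤ ∑ q ∈ P, gnp n p hp {f | ∀ e ∈ crossPairs q.1 q.2, f e = false} :=
        measure_biUnion_finset_le _ _
    _ = ∑ _q ∈ P, (1 - ENNReal.ofReal p) ^ (k * k) := by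
        refine sum_congr rfl fun q hq => ?_
        simp only [P, mem_filter, mem_product, mem_powersetCard_univ] at hq
        rw [gnp_forall_mem_eq_false, card_crossPairs hq.2, hq.1.1, hq.1.2]
    _ ≤ _ := by
        rw [sum_const, nsmul_eq_mul]
        gcongr

lemma tendsto_measure_nhds_one_of_compl_le {Ω : ℕ → Type*} [∀ n, MeasurableSpace (Ω n)]
    (μ : ∀ n, Measure (Ω n)) [∀ n, IsProbabilityMeasure (μ n)] (A : ∀ n, Set (Ω n))
    {ε : ℕ → ℝ≥0∞} (hε : Tendsto ε atTop (nhds 0)) (h : ∀ n, μ n (A n)ᶜ ≤ ε n) :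
    Tendsto (fun n => μ n (A n)) atTop (nhds 1) := by
  have hlow : Tendsto (fun n => 1 - ε n) atTop (nhds 1) := by
    simpa using ENNReal.Tendsto.sub tendsto_const_nhds hε (Or.inl ENNReal.one_ne_top)
  refine tendsto_of_tendsto_of_tendsto_of_le_of_le hlow tendsto_const_nhds (fun n => ?_)
    fun n => prob_le_one
  calc 1 - ε n ≤ 1 - μ n (A n)ᶜ := tsub_le_tsub_left (h n) 1
    _ ≤ μ n (A n) := by
      rw [tsub_le_iff_right, ← measure_univ (μ := μ n)]
      exact measure_univ_le_add_compl _

lemma choose_sq_mul_pow_le_inv_factorial_sq {n k : ℕ} {q : ℝ} (hq : 0 ≤ q)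
    (h : (n : ℝ) ^ 2 * q ^ k ≤ 1) :
    (n.choose k : ℝ) ^ 2 * q ^ (k * k) ≤ ((k.factorial : ℝ)⁻¹) ^ 2 := by
  calc (n.choose k : ℝ) ^ 2 * q ^ (k * k)
      ≤ ((n : ℝ) ^ k / k.factorial) ^ 2 * q ^ (k * k) := by
        gcongr
        exact Nat.choose_le_pow_div k n
    _ = ((k.factorial : ℝ)⁻¹) ^ 2 * ((n : ℝ) ^ 2 * q ^ k) ^ k := by ring
    _ ≤ ((k.factorial : ℝ)⁻¹) ^ 2 :=
        mul_le_of_le_one_right (by positivity) (pow_le_one₀ (by positivity) h)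

lemma tendsto_choose_sq_mul_pow_nhds_zero {k : ℕ → ℕ} (hk : Tendsto k atTop atTop) {q : ℝ}
    (hq : 0 ≤ q) (h : ∀ n : ℕ, (n : ℝ) ^ 2 * q ^ k n ≤ 1) :
    Tendsto (fun n : ℕ => (n.choose (k n) : ℝ) ^ 2 * q ^ (k n * k n)) atTop (nhds 0) := by
  have hfac : Tendsto (fun n => (((k n).factorial : ℝ)⁻¹) ^ 2) atTop (nhds 0) := by
    simpa using ((tendsto_inv_atTop_zero.comp
      ((tendsto_natCast_atTop_atTop (R := ℝ)).comp (factorial_tendsto_atTop.comp hk))).pow 2)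
  exact squeeze_zero (fun n => by positivity)
    (fun n => choose_sq_mul_pow_le_inv_factorial_sq hq (h n)) hfac

lemma sq_mul_one_sub_pow_le_one {p : ℝ} (hp : p ≤ 1) {n k : ℕ}
    (hk : 2 * Real.log n ≤ p * k) : (n : ℝ) ^ 2 * (1 - p) ^ k ≤ 1 := by
  rcases n.eq_zero_or_pos with rfl | hn
  · simp
  have hexp : (1 - p) ^ k ≤ Real.exp (-(2 * Real.log n)) :=
    calc (1 - p) ^ k ≤ Real.exp (-p) ^ k := by
          gcongr
          linarith [Real.add_one_le_exp (-p)]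
      _ = Real.exp (-(p * k)) := by rw [← Real.exp_nat_mul]; ring_nf
      _ ≤ Real.exp (-(2 * Real.log n)) := Real.exp_le_exp.mpr (by linarith)
  calc (n : ℝ) ^ 2 * (1 - p) ^ k ≤ (n : ℝ) ^ 2 * Real.exp (-(2 * Real.log n)) := by gcongr
    _ = 1 := by
      rw [Real.exp_neg, two_mul, Real.exp_add, Real.exp_log (by positivity)]
      field_simp

lemma tendsto_ceil_two_mul_log_div_atTop {p : ℝ} (hp : 0 < p) :
    Tendsto (fun n : ℕ => ⌈2 * Real.log n / p⌉₊) atTop atTop :=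
  tendsto_nat_ceil_atTop.comp <| Tendsto.atTop_div_const hp <|
    (Real.tendsto_log_atTop.comp tendsto_natCast_atTop_atTop).const_mul_atTop two_pos

lemma two_mul_log_le_mul_ceil {p : ℝ} (hp : 0 < p) (n : ℕ) :
    2 * Real.log n ≤ p * ⌈2 * Real.log n / p⌉₊ := by
  rw [← div_le_iff₀' hp]
  exact Nat.le_ceil _

/-- for fixed `p ∈ (0,1)` and `k_n = ⌈2 ln n / p⌉`, asymptotically almost surely
every vertex set `S` of `G(n,p)` with `|S| = k_n` satisfies `|N(S)| ≥ n − |S| − k_n = n − 2k_n`. -/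
theorem gnp_all_ksets_large_nbhd (p : ℝ) (hp0 : 0 < p) (hp1 : p < 1) :
    Tendsto
      (fun n : ℕ =>
        gnp n p hp1.le
          {f | ∀ S : Finset (Fin n), S.card = ⌈2 * Real.log n / p⌉₊ →
            n - 2 * ⌈2 * Real.log n / p⌉₊ ≤ (extNbhd (graphOf f) S).card})
      atTop (nhds (1 : ℝ≥0∞)) := by
  set k : ℕ → ℕ := fun n => ⌈2 * Real.log n / p⌉₊
  have hbound : Tendsto (fun n : ℕ => (n.choose (k n) : ℝ) ^ 2 * (1 - p) ^ (k n * k n))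
      atTop (nhds 0) :=
    tendsto_choose_sq_mul_pow_nhds_zero (tendsto_ceil_two_mul_log_div_atTop hp0)
      (by linarith) fun n => sq_mul_one_sub_pow_le_one hp1.le (two_mul_log_le_mul_ceil hp0 n)
  refine tendsto_measure_nhds_one_of_compl_le (fun n => gnp n p hp1.le) _
    (ENNReal.ofReal_zero ▸ ENNReal.tendsto_ofReal hbound) fun n => ?_
  refine (gnp_exists_card_extNbhd_lt_le n (k n) p hp1.le).trans_eq ?_
  rw [ENNReal.ofReal_mul (by positivity), ENNReal.ofReal_pow (by positivity),
    ENNReal.ofReal_pow (by linarith), ENNReal.ofReal_sub 1 hp0.le, ENNReal.ofReal_one,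
    ENNReal.ofReal_natCast, Nat.cast_pow]
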